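/- Let p : ℝ → ℝ be a smooth 2π-periodic function, the support function of an ℓ-convex Legendre curve with ℓ = 1, with β = p + p'', algebraic length L = ∫₀^{2π} p(θ) dθ and algebraic area A = (1/2)∫₀^{2π} p(θ)β(θ) dθ. Then ∫₀^{2π} β(θ)² dθ − 2A ≥ 8(L²/(4π) − A), with equality if and only if p(θ) = a₀ + a₁ cos θ + b₁ sin θ + a₂ cos 2θ + b₂ sin 2θ for some real constants a₀, a₁, b₁, a₂, b₂ (i.e. the curve is a parallel curve of an astroid). -/

import Mathlib

open Real

/-- The curvature quantity `β = p + p''` of an ℓ-convex Legendre curve (ℓ = 1)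
with support function `p`. -/
noncomputable def betaF (p : ℝ → ℝ) : ℝ → ℝ := fun θ => p θ + iteratedDeriv 2 p θ

/-- The algebraic length `L = ∫₀^{2π} p`. -/
noncomputable def algLen (p : ℝ → ℝ) : ℝ := ∫ θ in (0:ℝ)..(2 * π), p θ

/-- The algebraic area `A = (1/2) ∫₀^{2π} p β`. -/
noncomputable def algArea (p : ℝ → ℝ) : ℝ :=
  (1 / 2) * ∫ θ in (0:ℝ)..(2 * π), p θ * betaF p θ

/-!
Write `cₙ` for the Fourier coefficients of `p` on `[0, 2π]`. Integrating by parts twice, `β`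
has coefficients `(1 - n²) cₙ`, and `L = 2π c₀`. Since `2 p β = β² + p² - (p'')²`, the area is
also a combination of squared `L²` norms, so Parseval's identity alone gives
`∫ β² - 2A - 8 (L²/(4π) - A) = 2π ∑_{n ≠ 0} (n² - 1)(n² - 4) |cₙ|²`.
The weights are nonnegative on the integers and vanish exactly for `|n| ≤ 2`, so the deficit is
nonnegative and it vanishes iff `p` is a trigonometric polynomial of degree at most two.
-/

open MeasureTheory Complex Function

section Fourier

variable {T : ℝ}

theorem Function.Periodic.deriv {f : ℝ → ℝ} (hf : Periodic f T) : Periodic (_root_.deriv f) T :=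
  fun x => by rw [← deriv_comp_add_const, show (fun y => f (y + T)) = f from funext hf]

theorem fourierCoeffOn_add {a b : ℝ} (hab : a < b) {f g : ℝ → ℂ}
    (hf : IntervalIntegrable f volume a b) (hg : IntervalIntegrable g volume a b) (n : ℤ) :
    fourierCoeffOn hab (fun x => f x + g x) n =
      fourierCoeffOn hab f n + fourierCoeffOn hab g n := by
  have hfourier : Continuous fun x : ℝ => fourier (-n) (x : AddCircle (b - a)) :=
    (map_continuous _).comp (AddCircle.continuous_mk' _)
  simp only [fourierCoeffOn_eq_integral, smul_eq_mul, mul_add]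
  rw [intervalIntegral.integral_add (hf.continuousOn_mul hfourier.continuousOn)
    (hg.continuousOn_mul hfourier.continuousOn), smul_add]

theorem fourierCoeffOn_deriv_of_periodic (hT : 0 < T) {f f' : ℝ → ℂ} (hf : Periodic f T)
    (hd : ∀ x, HasDerivAt f (f' x) x) (hf' : IntervalIntegrable f' volume 0 T) (n : ℤ) :
    fourierCoeffOn hT f' n = 2 * π * I * n / T * fourierCoeffOn hT f n := by
  have hT₀ : f T = f 0 := by simpa using hf 0
  rcases eq_or_ne n 0 with rfl | hn
  · simp only [fourierCoeffOn_eq_integral, neg_zero, fourier_zero, one_smul,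
      intervalIntegral.integral_eq_sub_of_hasDerivAt (fun x _ => hd x) hf', hT₀, sub_self,
      smul_zero, Int.cast_zero, mul_zero, zero_div, zero_mul]
  · rw [fourierCoeffOn_of_hasDerivAt hT hn (fun x _ => hd x) hf', hT₀, sub_self, mul_zero,
      zero_sub, ofReal_zero, sub_zero]
    have : (T : ℂ) ≠ 0 := by exact_mod_cast hT.ne'
    have : (n : ℂ) ≠ 0 := by exact_mod_cast hn
    field_simp

theorem fourierCoeffOn_iteratedDeriv_two_of_periodic (hT : 0 < T) {p : ℝ → ℝ}
    (hp : ContDiff ℝ 2 p) (hper : Periodic p T) (n : ℤ) :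
    fourierCoeffOn hT (fun x => ((iteratedDeriv 2 p x : ℝ) : ℂ)) n =
      -(2 * π * n / T) ^ 2 * fourierCoeffOn hT (fun x => (p x : ℂ)) n := by
  obtain ⟨hp₁, -, hp'⟩ := (contDiff_succ_iff_deriv (n := 1)).mp hp
  obtain ⟨hp₂, hp₃⟩ := contDiff_one_iff_deriv.mp hp'
  have hd₁ : ∀ x, HasDerivAt (fun x => (p x : ℂ)) ((deriv p x : ℝ) : ℂ) x :=
    fun x => (hp₁ x).hasDerivAt.ofReal_comp
  have hd₂ : ∀ x, HasDerivAt (fun x => ((deriv p x : ℝ) : ℂ)) ((deriv (deriv p) x : ℝ) : ℂ) x :=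
    fun x => (hp₂ x).hasDerivAt.ofReal_comp
  have hper₁ : Periodic (fun x => (p x : ℂ)) T := hper.comp ofReal
  have hper₂ : Periodic (fun x => ((deriv p x : ℝ) : ℂ)) T := hper.deriv.comp ofReal
  rw [iteratedDeriv_succ, iteratedDeriv_one,
    fourierCoeffOn_deriv_of_periodic hT hper₂ hd₂
      ((continuous_ofReal.comp hp₃).intervalIntegrable _ _),
    fourierCoeffOn_deriv_of_periodic hT hper₁ hd₁
      ((continuous_ofReal.comp hp₂.continuous).intervalIntegrable _ _)]
  linear_combination (2 * π * n / T) ^ 2 * fourierCoeffOn hT (fun x => (p x : ℂ)) n * I_sq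

theorem hasSum_sq_fourierCoeffOn_ofReal (hT : 0 < T) {f : ℝ → ℝ} (hf : Continuous f) :
    HasSum (fun n => ‖fourierCoeffOn hT (fun x => (f x : ℂ)) n‖ ^ 2)
      (T⁻¹ * ∫ x in 0..T, f x ^ 2) := by
  obtain ⟨C, hC⟩ := (isCompact_Icc (a := 0) (b := T)).exists_bound_of_continuousOn
    (continuous_ofReal.comp hf).continuousOn
  have hL2 : MemLp (fun x => (f x : ℂ)) 2 (volume.restrict (Set.Ioc 0 T)) :=
    MemLp.of_bound (continuous_ofReal.comp hf).aestronglyMeasurable C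
      ((ae_restrict_iff' measurableSet_Ioc).mpr (Filter.Eventually.of_forall
        fun x hx => hC x (Set.Ioc_subset_Icc_self hx)))
  simpa [norm_real, sq_abs] using hasSum_sq_fourierCoeffOn hT hL2

theorem fourierCoeffOn_zero_ofReal (hT : 0 < T) (f : ℝ → ℝ) :
    fourierCoeffOn hT (fun x => (f x : ℂ)) 0 = ((T⁻¹ * ∫ x in 0..T, f x : ℝ) : ℂ) := by
  simp [fourierCoeffOn_eq_integral, intervalIntegral.integral_ofReal]

theorem Function.Periodic.fourierCoeffOn_eq_fourierCoeff_lift [hT : Fact (0 < T)] {f : ℝ → ℂ}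
    (hf : Periodic f T) (n : ℤ) : fourierCoeffOn hT.out f n = fourierCoeff hf.lift n := by
  rw [fourierCoeffOn_eq_integral, fourierCoeff_eq_intervalIntegral _ _ 0]
  simp [Periodic.lift_coe]

theorem ContinuousMap.fourierCoeff_eq_zero_off_iff [Fact (0 < T)] (f : C(AddCircle T, ℂ))
    (s : Finset ℤ) :
    (∀ n ∉ s, fourierCoeff f n = 0) ↔ ∃ γ : ℤ → ℂ, f = ∑ m ∈ s, γ m • fourier m := by
  constructor
  · intro h
    refine ⟨fourierCoeff f, ?_⟩
    exact (hasSum_fourier_series_of_summable (summable_of_ne_finset_zero h)).unique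
      (hasSum_sum_of_ne_finset_zero fun n hn => by rw [h n hn, zero_smul])
  · rintro ⟨γ, rfl⟩ n hn
    have hint : ∀ m ∈ s,
        Integrable (⇑(γ m • fourier m : C(AddCircle T, ℂ))) AddCircle.haarAddCircle :=
      fun m _ => (map_continuous _).integrable_of_hasCompactSupport (.of_compactSpace _)
    rw [ContinuousMap.coe_sum, fourierCoeff.sum s _ hint, Finset.sum_apply]
    refine Finset.sum_eq_zero fun m hm => ?_
    rw [ContinuousMap.coe_smul, fourierCoeff.const_smul, fourierCoeff_fourier,
      Pi.single_eq_of_ne (by rintro rfl; exact hn hm), smul_zero]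

theorem Function.Periodic.fourierCoeffOn_eq_zero_off_iff [hT : Fact (0 < T)] {f : ℝ → ℂ}
    (hf : Periodic f T) (hc : Continuous f) (s : Finset ℤ) :
    (∀ n ∉ s, fourierCoeffOn hT.out f n = 0) ↔
      ∃ γ : ℤ → ℂ, ∀ x : ℝ, f x = ∑ m ∈ s, γ m * fourier m (x : AddCircle T) := by
  let F : C(AddCircle T, ℂ) := ⟨hf.lift, continuous_coinduced_dom.mpr hc⟩
  simp only [hf.fourierCoeffOn_eq_fourierCoeff_lift]
  refine (F.fourierCoeff_eq_zero_off_iff s).trans (exists_congr fun γ => ?_)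
  rw [ContinuousMap.ext_iff,
    (QuotientAddGroup.mk_surjective (s := AddSubgroup.zmultiples T)).forall]
  simp [F, Periodic.lift_coe]

end Fourier

theorem fourier_coe_two_pi (m : ℤ) (θ : ℝ) :
    fourier m (θ : AddCircle (2 * π)) = (Real.cos (m * θ) : ℂ) + (Real.sin (m * θ) : ℂ) * I := by
  rw [fourier_coe_apply, ofReal_cos, ofReal_sin, ← exp_mul_I]
  congr 1
  push_cast
  field_simp

theorem Finset.sum_Icc_neg_two_two {M : Type*} [AddCommMonoid M] (f : ℤ → M) :
    ∑ m ∈ Finset.Icc (-2) 2, f m = f (-2) + f (-1) + f 0 + f 1 + f 2 := by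
  rw [show Finset.Icc (-2 : ℤ) 2 = {-2, -1, 0, 1, 2} by decide]
  simp [add_assoc]

theorem exists_trig_eq_iff_exists_fourier_sum (p : ℝ → ℝ) :
    (∃ a₀ a₁ b₁ a₂ b₂ : ℝ, ∀ θ : ℝ, p θ = a₀ + a₁ * Real.cos θ + b₁ * Real.sin θ
        + a₂ * Real.cos (2 * θ) + b₂ * Real.sin (2 * θ)) ↔
      ∃ γ : ℤ → ℂ, ∀ θ : ℝ,
        (p θ : ℂ) = ∑ m ∈ Finset.Icc (-2) 2, γ m * fourier m (θ : AddCircle (2 * π)) := by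
  simp only [Finset.sum_Icc_neg_two_two, fourier_coe_two_pi, Int.cast_neg, Int.cast_ofNat,
    Int.cast_one, Int.cast_zero, neg_mul, one_mul, zero_mul, Real.cos_neg, Real.sin_neg,
    Real.cos_zero, Real.sin_zero]
  constructor
  · rintro ⟨a₀, a₁, b₁, a₂, b₂, hp⟩
    refine ⟨fun m => if m = 0 then a₀ else if m = 1 then ⟨a₁ / 2, -b₁ / 2⟩
      else if m = -1 then ⟨a₁ / 2, b₁ / 2⟩ else if m = 2 then ⟨a₂ / 2, -b₂ / 2⟩
      else ⟨a₂ / 2, b₂ / 2⟩, fun θ => ?_⟩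
    apply Complex.ext <;> simp [hp θ] <;> ring
  · rintro ⟨γ, hγ⟩
    refine ⟨(γ 0).re, (γ 1).re + (γ (-1)).re, (γ (-1)).im - (γ 1).im,
      (γ 2).re + (γ (-2)).re, (γ (-2)).im - (γ 2).im, fun θ => ?_⟩
    have hre := congrArg re (hγ θ)
    simp only [add_re, add_im, mul_re, mul_im, ofReal_re, ofReal_im, I_re, I_im] at hre
    rw [hre]
    ring

def deficitWeight (n : ℤ) : ℝ :=
  if n = 0 then 0 else ((n : ℝ) ^ 2 - 1) * ((n : ℝ) ^ 2 - 4)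

theorem deficitWeight_eq_zero {n : ℤ} (hn : n ∈ Finset.Icc (-2) 2) : deficitWeight n = 0 := by
  obtain ⟨h₁, h₂⟩ := Finset.mem_Icc.mp hn
  interval_cases n <;> norm_num [deficitWeight]

theorem deficitWeight_pos {n : ℤ} (hn : n ∉ Finset.Icc (-2) 2) : 0 < deficitWeight n := by
  have hsq : (9 : ℝ) ≤ (n : ℝ) ^ 2 := by
    have : (9 : ℤ) ≤ n ^ 2 := by
      rw [Finset.mem_Icc, not_and_or, not_le, not_le] at hn
      rcases hn with h | h <;> nlinarith
    exact_mod_cast this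
  rw [deficitWeight, if_neg (by rintro rfl; norm_num at hsq)]
  nlinarith

theorem deficitWeight_nonneg (n : ℤ) : 0 ≤ deficitWeight n := by
  by_cases hn : n ∈ Finset.Icc (-2) 2
  · exact (deficitWeight_eq_zero hn).ge
  · exact (deficitWeight_pos hn).le

noncomputable def astroidDeficit (p : ℝ → ℝ) : ℝ :=
  (∫ θ in (0:ℝ)..(2 * π), (betaF p θ) ^ 2) - 2 * algArea p
    - 8 * ((algLen p) ^ 2 / (4 * π) - algArea p)

section SupportFunction

variable {p : ℝ → ℝ}

theorem fourierCoeffOn_iteratedDeriv_two_two_pi (hp : ContDiff ℝ 2 p) (hper : Periodic p (2 * π))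
    (n : ℤ) :
    fourierCoeffOn two_pi_pos (fun θ => ((iteratedDeriv 2 p θ : ℝ) : ℂ)) n =
      ((-(n : ℝ) ^ 2 : ℝ) : ℂ) * fourierCoeffOn two_pi_pos (fun θ => (p θ : ℂ)) n := by
  rw [fourierCoeffOn_iteratedDeriv_two_of_periodic two_pi_pos hp hper]
  congr 1
  push_cast
  field_simp

theorem fourierCoeffOn_betaF (hp : ContDiff ℝ 2 p) (hper : Periodic p (2 * π)) (n : ℤ) :
    fourierCoeffOn two_pi_pos (fun θ => (betaF p θ : ℂ)) n =
      ((1 - (n : ℝ) ^ 2 : ℝ) : ℂ) * fourierCoeffOn two_pi_pos (fun θ => (p θ : ℂ)) n := by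
  have hc₀ : Continuous fun θ => (p θ : ℂ) := continuous_ofReal.comp hp.continuous
  have hc₂ : Continuous fun θ => ((iteratedDeriv 2 p θ : ℝ) : ℂ) :=
    continuous_ofReal.comp (hp.continuous_iteratedDeriv 2 le_rfl)
  simp only [betaF, ofReal_add]
  rw [fourierCoeffOn_add _ (hc₀.intervalIntegrable _ _) (hc₂.intervalIntegrable _ _),
    fourierCoeffOn_iteratedDeriv_two_two_pi hp hper]
  push_cast
  ring

theorem algArea_eq (hp : ContDiff ℝ 2 p) :
    algArea p = ((∫ θ in (0:ℝ)..(2 * π), betaF p θ ^ 2) + (∫ θ in (0:ℝ)..(2 * π), p θ ^ 2)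
      - ∫ θ in (0:ℝ)..(2 * π), iteratedDeriv 2 p θ ^ 2) / 4 := by
  have hc₀ := hp.continuous
  have hc₂ := hp.continuous_iteratedDeriv 2 le_rfl
  have hβ : Continuous (betaF p) := hc₀.add hc₂
  have hpol : ∀ θ, p θ * betaF p θ = (betaF p θ ^ 2 + p θ ^ 2 - iteratedDeriv 2 p θ ^ 2) / 2 :=
    fun θ => by simp only [betaF]; ring
  have hi : ∀ f : ℝ → ℝ, Continuous f → IntervalIntegrable (fun θ => f θ ^ 2) volume 0 (2 * π) :=
    fun f hf => (hf.pow 2).intervalIntegrable _ _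
  rw [algArea, funext hpol, intervalIntegral.integral_div,
    intervalIntegral.integral_sub ((hi _ hβ).add (hi _ hc₀)) (hi _ hc₂),
    intervalIntegral.integral_add (hi _ hβ) (hi _ hc₀)]
  ring

theorem hasSum_deficitWeight_mul_sq (hp : ContDiff ℝ 2 p) (hper : Periodic p (2 * π)) :
    HasSum (fun n => deficitWeight n * ‖fourierCoeffOn two_pi_pos (fun θ => (p θ : ℂ)) n‖ ^ 2)
      (astroidDeficit p / (2 * π)) := by
  have hnorm : ∀ (r : ℝ) (z : ℂ), ‖(r : ℂ) * z‖ ^ 2 = r ^ 2 * ‖z‖ ^ 2 := fun r z => by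
    rw [norm_mul, norm_real, Real.norm_eq_abs, mul_pow, sq_abs]
  have hp₀ := hasSum_sq_fourierCoeffOn_ofReal two_pi_pos hp.continuous
  have hp₂ := hasSum_sq_fourierCoeffOn_ofReal two_pi_pos (hp.continuous_iteratedDeriv 2 le_rfl)
  have hβ := hasSum_sq_fourierCoeffOn_ofReal (f := betaF p) two_pi_pos
    (hp.continuous.add (hp.continuous_iteratedDeriv 2 le_rfl))
  simp only [fourierCoeffOn_iteratedDeriv_two_two_pi hp hper, hnorm] at hp₂
  simp only [fourierCoeffOn_betaF hp hper, hnorm] at hβ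
  have hc₀ : ‖fourierCoeffOn two_pi_pos (fun θ => (p θ : ℂ)) 0‖ ^ 2 = (algLen p / (2 * π)) ^ 2 := by
    rw [fourierCoeffOn_zero_ofReal, norm_real, Real.norm_eq_abs, sq_abs, algLen, inv_mul_eq_div]
  have hsum := (((hβ.mul_left (5 / 2)).add (hp₀.mul_left (3 / 2))).sub
    (hp₂.mul_left (3 / 2))).sub (hasSum_ite_eq 0 (4 * (algLen p / (2 * π)) ^ 2))
  refine (congrArg (HasSum _) ?_).mpr (hsum.congr_fun fun n => ?_)
  · rw [astroidDeficit, algArea_eq hp]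
    field_simp
    ring
  · rcases eq_or_ne n 0 with rfl | hn
    · simp [deficitWeight, hc₀]
      ring
    · simp only [deficitWeight, if_neg hn]
      ring

theorem astroidDeficit_nonneg (hp : ContDiff ℝ 2 p) (hper : Periodic p (2 * π)) :
    0 ≤ astroidDeficit p := by
  have h := (hasSum_deficitWeight_mul_sq hp hper).nonneg
    fun n => mul_nonneg (deficitWeight_nonneg n) (sq_nonneg _)
  rwa [le_div_iff₀ two_pi_pos, zero_mul] at h

theorem astroidDeficit_eq_zero_iff (hp : ContDiff ℝ 2 p) (hper : Periodic p (2 * π)) :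
    astroidDeficit p = 0 ↔
      ∀ n ∉ Finset.Icc (-2) 2, fourierCoeffOn two_pi_pos (fun θ => (p θ : ℂ)) n = 0 := by
  have hsum := hasSum_deficitWeight_mul_sq hp hper
  have hnonneg : ∀ n,
      0 ≤ deficitWeight n * ‖fourierCoeffOn two_pi_pos (fun θ => (p θ : ℂ)) n‖ ^ 2 :=
    fun n => mul_nonneg (deficitWeight_nonneg n) (sq_nonneg _)
  constructor
  · intro h n hn
    rw [h, zero_div, hasSum_zero_iff_of_nonneg hnonneg] at hsum
    simpa [(deficitWeight_pos hn).ne'] using congrFun hsum n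
  · intro h
    refine (div_eq_zero_iff.mp (hsum.unique ((hasSum_zero_iff_of_nonneg hnonneg).mpr
      (funext fun n => ?_)))).resolve_right two_pi_pos.ne'
    by_cases hn : n ∈ Finset.Icc (-2) 2
    · simp [deficitWeight_eq_zero hn]
    · simp [h n hn]

end SupportFunction

theorem beta_square_integral_inequality_sharp
    (p : ℝ → ℝ) (hp : ContDiff ℝ (⊤ : ℕ∞) p)
    (hper : Function.Periodic p (2 * π)) :
    8 * ((algLen p) ^ 2 / (4 * π) - algArea p)
      ≤ (∫ θ in (0:ℝ)..(2 * π), (betaF p θ) ^ 2) - 2 * algArea p ∧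
    ((∫ θ in (0:ℝ)..(2 * π), (betaF p θ) ^ 2) - 2 * algArea p
        = 8 * ((algLen p) ^ 2 / (4 * π) - algArea p) ↔
      ∃ a₀ a₁ b₁ a₂ b₂ : ℝ, ∀ θ : ℝ,
        p θ = a₀ + a₁ * Real.cos θ + b₁ * Real.sin θ
          + a₂ * Real.cos (2 * θ) + b₂ * Real.sin (2 * θ)) := by
  have hp₂ : ContDiff ℝ 2 p := hp.of_le (WithTop.coe_le_coe.mpr le_top)
  have : Fact (0 < 2 * π) := ⟨two_pi_pos⟩
  have hdef := astroidDeficit_nonneg hp₂ hper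
  rw [astroidDeficit] at hdef
  refine ⟨by linarith, ?_⟩
  rw [← sub_eq_zero, ← astroidDeficit, astroidDeficit_eq_zero_iff hp₂ hper,
    exists_trig_eq_iff_exists_fourier_sum]
  exact (hper.comp ofReal).fourierCoeffOn_eq_zero_off_iff (continuous_ofReal.comp hp.continuous) _
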